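/- arXiv:1207.5077 — 3 statements merged into one kernel-verified Lean document; each statement's English description precedes it below -/
import Mathlib

section
/- Let p ∈ [1,∞), let γ : (0,∞) → ℝ be a function of bounded variation, let (c_k)_{k≥1} be complex numbers with Σ_{k=1}^∞ |c_k| < ∞ and with c_k ≠ 0 for at least one k, let (φ_k)_{k≥1} be pairwise distinct real numbers, and set W(x) = Σ_{k=1}^∞ c_k e^{−iφ_k x}. If ∫_0^∞ |W(x) γ(x)|^p dx < ∞, then ∫_0^∞ |γ(x)|^p dx < ∞. -/
/-!
Since the frequencies are distinct, the mean of `W(x) e^{iφ_{k₀}x}` over an interval of length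
`T` is `c_{k₀} + O(1/T)`, uniformly in the position of the interval. As `|W| ≤ ∑ |c_k|`, for
`T` large every interval of length `T` meets the superlevel set `A = {|W| ≥ m}`,
`m = |c_{k₀}|/4`, in a set of measure at least some `ρ > 0`.

On a block `(nT, (n+1)T]`, `|γ|` differs from its value at any point of `A` by at most the
variation `v_n` of `γ` on the block, so averaging over the block's part of `A` gives
`ρ ∫_{block} |γ|^p ≲ ∫_{block ∩ A} |γ|^p + v_n^p`. Summing over `n`, with
`∑ v_n^p ≤ (∑ v_n)^p ≤ Var(γ)^p` and `|γ| ≤ |Wγ| / m` on `A`, bounds `∫ |γ|^p`.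
-/

open scoped ENNReal
open MeasureTheory Set

theorem ENNReal.tsum_rpow_le_rpow_tsum (a : ℕ → ℝ≥0∞) {p : ℝ} (hp : 1 ≤ p) :
    ∑' n, a n ^ p ≤ (∑' n, a n) ^ p := by
  have hpow : ∀ x : ℝ≥0∞, x ^ p = x ^ (p - 1) * x := fun x => by
    simpa using ENNReal.rpow_add_of_nonneg (x := x) (p - 1) 1 (by linarith) zero_le_one
  have hterm : ∀ n, a n ^ p ≤ (∑' n, a n) ^ (p - 1) * a n := fun n => by
    rw [hpow]
    gcongr
    exact ENNReal.le_tsum n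
  calc ∑' n, a n ^ p ≤ ∑' n, (∑' n, a n) ^ (p - 1) * a n := ENNReal.tsum_le_tsum hterm
    _ = (∑' n, a n) ^ p := by
      rw [ENNReal.tsum_mul_left, hpow]

theorem eVariationOn.tsum_le_iUnion {α E : Type*} [LinearOrder α] [PseudoEMetricSpace E]
    (f : α → E) {s : ℕ → Set α} (hs : ∀ i j, i < j → ∀ x ∈ s i, ∀ y ∈ s j, x ≤ y) :
    ∑' n, eVariationOn f (s n) ≤ eVariationOn f (⋃ n, s n) := by
  have hfin : ∀ N, ∑ n ∈ Finset.range N, eVariationOn f (s n)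
      ≤ eVariationOn f (⋃ n ∈ Finset.range N, s n) := by
    intro N
    induction N with
    | zero => simp
    | succ N ih =>
      rw [Finset.sum_range_succ, Finset.range_add_one, Finset.set_biUnion_insert, union_comm]
      refine (add_le_add_left ih _).trans (eVariationOn.add_le_union f ?_)
      simp only [Finset.mem_range, mem_iUnion, exists_prop]
      rintro x ⟨i, hi, hx⟩ y hy
      exact hs i N hi x hx y hy
  rw [ENNReal.tsum_eq_iSup_nat]
  exact iSup_le fun N => (hfin N).trans (eVariationOn.mono f (iUnion₂_subset_iUnion _ _))

theorem mul_setLIntegral_le_mul_setLIntegral {α : Type*} [MeasurableSpace α] {μ : Measure α}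
    {s t : Set α} {f g : α → ℝ≥0∞} (hs : MeasurableSet s) (ht : MeasurableSet t)
    (hμs : μ s ≠ ∞) (h : ∀ x ∈ t, ∀ y ∈ s, f y ≤ g x) :
    μ t * ∫⁻ y in s, f y ∂μ ≤ μ s * ∫⁻ x in t, g x ∂μ := by
  calc μ t * ∫⁻ y in s, f y ∂μ = ∫⁻ _ in t, ∫⁻ y in s, f y ∂μ ∂μ := by
        rw [setLIntegral_const, mul_comm]
    _ ≤ ∫⁻ x in t, μ s * g x ∂μ := setLIntegral_mono' ht fun x hx => by
        calc ∫⁻ y in s, f y ∂μ ≤ ∫⁻ _ in s, g x ∂μ := setLIntegral_mono' hs (h x hx)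
          _ = μ s * g x := by rw [setLIntegral_const, mul_comm]
    _ = μ s * ∫⁻ x in t, g x ∂μ := lintegral_const_mul' _ _ hμs

theorem mul_setLIntegral_rpow_enorm_le {α E : Type*} [LinearOrder α] [MeasurableSpace α]
    [NormedAddCommGroup E] {μ : Measure α} {γ : α → E} {s t : Set α} (hs : MeasurableSet s)
    (ht : MeasurableSet t) (hμs : μ s ≠ ∞) (hts : t ⊆ s) {p : ℝ} (hp : 1 ≤ p) :
    μ t * ∫⁻ y in s, ‖γ y‖ₑ ^ p ∂μ
      ≤ 2 ^ (p - 1) * μ s * (∫⁻ x in t, ‖γ x‖ₑ ^ p ∂μ + eVariationOn γ s ^ p * μ t) := by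
  have hpt : ∀ x ∈ t, ∀ y ∈ s,
      ‖γ y‖ₑ ^ p ≤ 2 ^ (p - 1) * (‖γ x‖ₑ ^ p + eVariationOn γ s ^ p) := fun x hx y hy => by
    have hy : ‖γ y‖ₑ ≤ ‖γ x‖ₑ + eVariationOn γ s := by
      grw [show γ y = γ x + (γ y - γ x) by abel, enorm_add_le, ← edist_eq_enorm_sub,
        eVariationOn.edist_le _ hy (hts hx)]
    grw [hy]
    exact ENNReal.rpow_add_le_mul_rpow_add_rpow _ _ hp
  calc μ t * ∫⁻ y in s, ‖γ y‖ₑ ^ p ∂μ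
      ≤ μ s * ∫⁻ x in t, 2 ^ (p - 1) * (‖γ x‖ₑ ^ p + eVariationOn γ s ^ p) ∂μ :=
        mul_setLIntegral_le_mul_setLIntegral hs ht hμs hpt
    _ = 2 ^ (p - 1) * μ s * (∫⁻ x in t, ‖γ x‖ₑ ^ p ∂μ + eVariationOn γ s ^ p * μ t) := by
        rw [lintegral_const_mul' _ _ (by finiteness), lintegral_add_right _ measurable_const,
          setLIntegral_const]
        ring

theorem setLIntegral_rpow_enorm_lt_top_of_norm_ge {α : Type*} [MeasurableSpace α]
    {μ : Measure α} {w : α → ℂ} {g : α → ℝ} {s : Set α} {m p : ℝ} (hm : 0 < m) (hp : 0 ≤ p)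
    (hs : MeasurableSet s) (hw : ∀ x ∈ s, m ≤ ‖w x‖)
    (h : ∫⁻ x in s, ‖w x * g x‖ₑ ^ p ∂μ < ∞) :
    ∫⁻ x in s, ‖g x‖ₑ ^ p ∂μ < ∞ := by
  have hpt : ∀ x ∈ s, ENNReal.ofReal m ^ p * ‖g x‖ₑ ^ p ≤ ‖w x * g x‖ₑ ^ p := fun x hx => by
    rw [← ENNReal.mul_rpow_of_nonneg _ _ hp, enorm_mul, ← ofReal_norm (w x)]
    gcongr
    · exact hw x hx
    · rw [← ofReal_norm, ← ofReal_norm, Complex.norm_real]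
  have hbound : ENNReal.ofReal m ^ p * ∫⁻ x in s, ‖g x‖ₑ ^ p ∂μ < ∞ := by
    rw [← lintegral_const_mul' _ _ (by finiteness)]
    exact (setLIntegral_mono' hs hpt).trans_lt h
  exact ENNReal.lt_top_of_mul_ne_top_right hbound.ne (by simp [hm])

theorem iUnion_Ioc_nat_mul_eq_Ioi {T : ℝ} (hT : 0 < T) :
    ⋃ n : ℕ, Ioc (n * T) ((n + 1) * T) = Ioi 0 := by
  have hunbdd : ¬BddAbove (range fun n : ℕ => (n : ℝ) * T) := by
    rintro ⟨M, hM⟩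
    obtain ⟨n, hn⟩ := exists_nat_gt (M / T)
    have := hM (mem_range_self n)
    rw [div_lt_iff₀ hT] at hn
    linarith
  simpa using iUnion_Ioc_map_succ_eq_Ioi
    (fun n => mul_le_mul_of_nonneg_right (Nat.cast_le.2 bot_le) hT.le) hunbdd

theorem BoundedVariationOn.lintegral_rpow_lt_top_of_relDense {E : Type*} [NormedAddCommGroup E]
    {γ : ℝ → E} (hγ : BoundedVariationOn γ (Ioi 0)) {A : Set ℝ} (hA : MeasurableSet A)
    {T : ℝ} {ρ : ℝ≥0∞} (hT : 0 < T) (hρ : ρ ≠ 0) (hdense : ∀ a, ρ ≤ volume (Ioc a (a + T) ∩ A))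
    {p : ℝ} (hp : 1 ≤ p) (hint : ∫⁻ x in Ioi 0 ∩ A, ‖γ x‖ₑ ^ p < ∞) :
    ∫⁻ x in Ioi 0, ‖γ x‖ₑ ^ p < ∞ := by
  set I : ℕ → Set ℝ := fun n => Ioc (n * T) ((n + 1) * T)
  have hmono : Monotone fun n : ℕ => (n : ℝ) * T := fun i j h =>
    mul_le_mul_of_nonneg_right (Nat.cast_le.mpr h) hT.le
  have hcover : ⋃ n, I n = Ioi 0 := iUnion_Ioc_nat_mul_eq_Ioi hT
  have hdisj : Pairwise (Function.onFun Disjoint I) := by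
    simpa using hmono.pairwise_disjoint_on_Ioc_succ
  have hordered : ∀ i j, i < j → ∀ x ∈ I i, ∀ y ∈ I j, x ≤ y := fun i j hij x hx y hy =>
    hx.2.trans (le_trans (by exact_mod_cast hmono (Nat.succ_le_of_lt hij)) hy.1.le)
  have hvol : ∀ n, volume (I n) = ENNReal.ofReal T := fun n => by
    rw [Real.volume_Ioc]
    ring_nf
  have hblock : ∀ n, ρ * ∫⁻ x in I n, ‖γ x‖ₑ ^ p ≤ 2 ^ (p - 1) * ENNReal.ofReal T *
      ((∫⁻ x in I n ∩ A, ‖γ x‖ₑ ^ p) + eVariationOn γ (I n) ^ p * ENNReal.ofReal T) := fun n => by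
    have hρn : ρ ≤ volume (I n ∩ A) := by
      convert hdense (n * T) using 4
      ring
    grw [hρn, mul_setLIntegral_rpow_enorm_le measurableSet_Ioc (measurableSet_Ioc.inter hA)
      (by simp) inter_subset_left hp, measure_mono (inter_subset_left : I n ∩ A ⊆ I n), hvol]
  have hvar : ∑' n, eVariationOn γ (I n) ^ p ≤ eVariationOn γ (Ioi 0) ^ p := by
    grw [ENNReal.tsum_rpow_le_rpow_tsum _ hp, eVariationOn.tsum_le_iUnion γ hordered, hcover]
  have hsumA : ∑' n, ∫⁻ x in I n ∩ A, ‖γ x‖ₑ ^ p = ∫⁻ x in Ioi 0 ∩ A, ‖γ x‖ₑ ^ p := by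
    rw [← lintegral_iUnion (fun n => measurableSet_Ioc.inter hA)
      (hdisj.mono fun _ _ h => h.mono inter_subset_left inter_subset_left), ← iUnion_inter, hcover]
  have hbound : ρ * ∫⁻ x in Ioi 0, ‖γ x‖ₑ ^ p ≤ 2 ^ (p - 1) * ENNReal.ofReal T *
      ((∫⁻ x in Ioi 0 ∩ A, ‖γ x‖ₑ ^ p) + eVariationOn γ (Ioi 0) ^ p * ENNReal.ofReal T) := by
    calc ρ * ∫⁻ x in Ioi 0, ‖γ x‖ₑ ^ p = ∑' n, ρ * ∫⁻ x in I n, ‖γ x‖ₑ ^ p := by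
          rw [← hcover, lintegral_iUnion (fun n => measurableSet_Ioc) hdisj, ENNReal.tsum_mul_left]
      _ ≤ ∑' n, 2 ^ (p - 1) * ENNReal.ofReal T *
          ((∫⁻ x in I n ∩ A, ‖γ x‖ₑ ^ p) + eVariationOn γ (I n) ^ p * ENNReal.ofReal T) :=
        ENNReal.tsum_le_tsum hblock
      _ ≤ _ := by
        rw [ENNReal.tsum_mul_left, ENNReal.tsum_add, ENNReal.tsum_mul_right, hsumA]
        gcongr
  have hV : eVariationOn γ (Ioi 0) ≠ ∞ := hγ
  have hint_ne := hint.ne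
  exact ENNReal.lt_top_of_mul_ne_top_right (hbound.trans_lt (by finiteness)).ne hρ

theorem norm_setIntegral_le_inter_add_diff {α E : Type*} [MeasurableSpace α]
    [NormedAddCommGroup E] [NormedSpace ℝ E] {μ : Measure α} {f : α → E} {s A : Set α}
    (hA : MeasurableSet A) (hs : μ s < ∞) (hf : IntegrableOn f s μ) {S m : ℝ}
    (hS : ∀ x ∈ s, ‖f x‖ ≤ S) (hm : ∀ x ∈ s \ A, ‖f x‖ ≤ m) :
    ‖∫ x in s, f x ∂μ‖ ≤ S * μ.real (s ∩ A) + m * μ.real (s \ A) := by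
  rw [← integral_inter_add_sdiff hA hf]
  refine (norm_add_le _ _).trans (add_le_add ?_ ?_)
  · exact norm_setIntegral_le_of_norm_le_const ((measure_mono inter_subset_left).trans_lt hs)
      fun x hx => hS x hx.1
  · exact norm_setIntegral_le_of_norm_le_const ((measure_mono sdiff_subset).trans_lt hs) hm

theorem norm_setIntegral_Ioc_exp_mul_le_two_div_abs {θ : ℝ} (hθ : θ ≠ 0) {a b : ℝ} (hab : a ≤ b) :
    ‖∫ x in Ioc a b, Complex.exp (Complex.I * θ * x)‖ ≤ 2 / |θ| := by
  have hIθ : Complex.I * θ ≠ 0 := by simp [hθ]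
  rw [← intervalIntegral.integral_of_le hab, integral_exp_mul_complex hIθ, norm_div]
  gcongr
  · grw [norm_sub_le]
    simp [Complex.norm_exp, one_add_one_eq_two]
  · simp

theorem norm_setIntegral_Ioc_exp_mul_le_sub (θ : ℝ) {a b : ℝ} (hab : a ≤ b) :
    ‖∫ x in Ioc a b, Complex.exp (Complex.I * θ * x)‖ ≤ b - a := by
  have := norm_setIntegral_le_of_norm_le_const (μ := volume) (s := Ioc a b)
    (f := fun x : ℝ => Complex.exp (Complex.I * θ * x)) (C := 1) (by simp)
    (fun x _ => by simp [Complex.norm_exp])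
  simpa [Real.volume_real_Ioc_of_le hab] using this

noncomputable def trigSeries (c : ℕ → ℂ) (φ : ℕ → ℝ) (x : ℝ) : ℂ :=
  ∑' k, c k * Complex.exp (-Complex.I * φ k * x)

namespace trigSeries

variable {c : ℕ → ℂ} {φ : ℕ → ℝ}

theorem norm_term (k : ℕ) (x : ℝ) : ‖c k * Complex.exp (-Complex.I * φ k * x)‖ = ‖c k‖ := by
  simp [Complex.norm_exp]

theorem continuous (hc : Summable fun k => ‖c k‖) : Continuous (trigSeries c φ) :=
  continuous_tsum (fun k => by fun_prop) hc fun k x => (norm_term k x).le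

theorem norm_le (hc : Summable fun k => ‖c k‖) (x : ℝ) :
    ‖trigSeries c φ x‖ ≤ ∑' k, ‖c k‖ :=
  (norm_tsum_le_tsum_norm (by simpa only [norm_term] using hc)).trans_eq (by simp only [norm_term])

theorem setIntegral_mul_exp (hc : Summable fun k => ‖c k‖) (θ : ℝ) {s : Set ℝ}
    (hs : volume s ≠ ∞) :
    ∫ x in s, trigSeries c φ x * Complex.exp (Complex.I * θ * x)
      = ∑' k, c k * ∫ x in s, Complex.exp (Complex.I * (θ - φ k) * x) := by
  have hterm : ∀ x : ℝ, trigSeries c φ x * Complex.exp (Complex.I * θ * x)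
      = ∑' k, c k * Complex.exp (Complex.I * (θ - φ k) * x) := fun x => by
    rw [trigSeries, ← tsum_mul_right]
    refine tsum_congr fun k => ?_
    rw [mul_assoc, ← Complex.exp_add]
    ring_nf
  simp_rw [hterm]
  rw [integral_tsum (fun k => by fun_prop)]
  · exact tsum_congr fun k => integral_const_mul _ _
  · have hnorm : ∀ k (x : ℝ), ‖c k * Complex.exp (Complex.I * (θ - φ k) * x)‖ₑ = ‖c k‖ₑ :=
      fun k x => by simp [← ofReal_norm, Complex.norm_exp]
    simp_rw [hnorm, setLIntegral_const, ENNReal.tsum_mul_right]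
    exact ENNReal.mul_ne_top (tsum_enorm_ne_top_iff_summable_norm.2 hc) hs

theorem exists_norm_setIntegral_mul_exp_sub_le (hc : Summable fun k => ‖c k‖)
    (hφ : Function.Injective φ) (k₀ : ℕ) {ε : ℝ} (hε : 0 < ε) :
    ∃ C, ∀ a T : ℝ, 0 ≤ T → ‖(∫ x in Ioc a (a + T),
      trigSeries c φ x * Complex.exp (Complex.I * φ k₀ * x)) - T * c k₀‖ ≤ C + ε * T := by
  obtain ⟨N, hN, hk₀N⟩ := ((tendsto_sum_nat_add fun k => ‖c k‖).eventually
    (ge_mem_nhds hε)).and (Filter.eventually_gt_atTop k₀) |>.exists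
  refine ⟨∑ k ∈ (Finset.range N).erase k₀, ‖c k‖ * (2 / |φ k₀ - φ k|), fun a T hT => ?_⟩
  set J : ℕ → ℂ := fun k => ∫ x in Ioc a (a + T), Complex.exp (Complex.I * (φ k₀ - φ k) * x)
  have hJ_le : ∀ k, ‖J k‖ ≤ T := fun k => by
    simpa using norm_setIntegral_Ioc_exp_mul_le_sub (φ k₀ - φ k) (le_add_of_nonneg_right hT)
  have hJ_osc : ∀ k ≠ k₀, ‖J k‖ ≤ 2 / |φ k₀ - φ k| := fun k hk => by
    simpa using norm_setIntegral_Ioc_exp_mul_le_two_div_abs (sub_ne_zero.2 (hφ.ne hk.symm))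
      (le_add_of_nonneg_right hT)
  have hJ₀ : J k₀ = T := by simp [J, hT]
  have hsum : Summable fun k => c k * J k :=
    .of_norm_bounded (hc.mul_right T) fun k => by
      rw [norm_mul]; exact mul_le_mul_of_nonneg_left (hJ_le k) (norm_nonneg _)
  have hsplit : (∫ x in Ioc a (a + T), trigSeries c φ x * Complex.exp (Complex.I * φ k₀ * x))
      - T * c k₀ = ∑ k ∈ (Finset.range N).erase k₀, c k * J k + ∑' k, c (k + N) * J (k + N) := by
    rw [trigSeries.setIntegral_mul_exp hc _ (by simp), ← hsum.sum_add_tsum_nat_add N,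
      ← Finset.add_sum_erase _ _ (Finset.mem_range.2 hk₀N), hJ₀]
    ring
  rw [hsplit]
  refine (norm_add_le _ _).trans (add_le_add ?_ ?_)
  · refine (norm_sum_le _ _).trans (Finset.sum_le_sum fun k hk => ?_)
    rw [norm_mul]
    exact mul_le_mul_of_nonneg_left (hJ_osc k (Finset.ne_of_mem_erase hk)) (norm_nonneg _)
  · calc ‖∑' k, c (k + N) * J (k + N)‖ ≤ (∑' k, ‖c (k + N)‖) * T :=
          tsum_of_norm_bounded (((summable_nat_add_iff N).2 hc).hasSum.mul_right T) fun k => by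
            rw [norm_mul]; exact mul_le_mul_of_nonneg_left (hJ_le _) (norm_nonneg _)
      _ ≤ ε * T := mul_le_mul_of_nonneg_right hN hT

theorem exists_norm_setIntegral_mul_exp_ge (hc : Summable fun k => ‖c k‖)
    (hφ : Function.Injective φ) {k₀ : ℕ} (hk₀ : c k₀ ≠ 0) :
    ∃ T > 0, ∀ a, T * ‖c k₀‖ / 2 ≤ ‖∫ x in Ioc a (a + T),
      trigSeries c φ x * Complex.exp (Complex.I * φ k₀ * x)‖ := by
  have hc₀ : 0 < ‖c k₀‖ := norm_pos_iff.2 hk₀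
  obtain ⟨C, hC⟩ := exists_norm_setIntegral_mul_exp_sub_le hc hφ k₀ (ε := ‖c k₀‖ / 4)
    (by positivity)
  set T := max 1 (4 * C / ‖c k₀‖)
  have hT : 0 < T := zero_lt_one.trans_le (le_max_left _ _)
  have hCT : C ≤ T * ‖c k₀‖ / 4 := by
    have := (div_le_iff₀ hc₀).1 (le_max_right 1 (4 * C / ‖c k₀‖))
    linarith
  refine ⟨T, hT, fun a => ?_⟩
  have hTc : ‖(T : ℂ) * c k₀‖ = T * ‖c k₀‖ := by simp [abs_of_pos hT]
  have := (abs_le.1 ((abs_norm_sub_norm_le _ _).trans (hC a T hT.le))).1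
  linarith

theorem exists_volume_Ioc_inter_superlevel_ge (hc : Summable fun k => ‖c k‖)
    (hne : ∃ k, c k ≠ 0) (hφ : Function.Injective φ) :
    ∃ m T : ℝ, ∃ ρ : ℝ≥0∞, 0 < m ∧ 0 < T ∧ ρ ≠ 0 ∧
      ∀ a, ρ ≤ volume (Ioc a (a + T) ∩ {x | m ≤ ‖trigSeries c φ x‖}) := by
  obtain ⟨k₀, hk₀⟩ := hne
  obtain ⟨T, hT, hlow⟩ := exists_norm_setIntegral_mul_exp_ge hc hφ hk₀
  set c₀ := ‖c k₀‖
  set S := ∑' k, ‖c k‖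
  have hc₀ : 0 < c₀ := norm_pos_iff.2 hk₀
  have hS : 0 < S := hc₀.trans_le (hc.le_tsum k₀ fun _ _ => norm_nonneg _)
  have hWc := trigSeries.continuous (φ := φ) hc
  set A := {x | c₀ / 4 ≤ ‖trigSeries c φ x‖}
  have hA : MeasurableSet A := (isClosed_le continuous_const hWc.norm).measurableSet
  refine ⟨c₀ / 4, T, ENNReal.ofReal (T * c₀ / (4 * S)), by positivity, hT,
    by simp only [ne_eq, ENNReal.ofReal_eq_zero, not_le]; positivity, fun a => ?_⟩
  have hnorm : ∀ x : ℝ, ‖trigSeries c φ x * Complex.exp (Complex.I * φ k₀ * x)‖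
      = ‖trigSeries c φ x‖ := fun x => by simp [Complex.norm_exp]
  have hup : ‖∫ x in Ioc a (a + T), trigSeries c φ x * Complex.exp (Complex.I * φ k₀ * x)‖
      ≤ S * volume.real (Ioc a (a + T) ∩ A) + c₀ / 4 * T := by
    refine (norm_setIntegral_le_inter_add_diff hA (by simp)
      (Continuous.integrableOn_Ioc (by fun_prop)) (S := S) (m := c₀ / 4) ?_ ?_).trans ?_
    · exact fun x _ => (hnorm x).trans_le (trigSeries.norm_le hc x)
    · exact fun x hx => (hnorm x).trans_le (not_le.1 hx.2).le
    · gcongr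
      calc volume.real (Ioc a (a + T) \ A) ≤ volume.real (Ioc a (a + T)) :=
            measureReal_mono sdiff_subset (by simp)
        _ = T := by simp [hT.le]
  have := hlow a
  refine ENNReal.ofReal_le_of_le_toReal ((div_le_iff₀ (by positivity)).2 ?_)
  rw [← measureReal_def]
  linarith

end trigSeries

theorem stmt17 (p : ℝ) (hp : 1 ≤ p)
    (γ : ℝ → ℝ) (hγ : BoundedVariationOn γ (Set.Ioi 0))
    (c : ℕ → ℂ) (hc : Summable fun k => ‖c k‖) (hne : ∃ k, c k ≠ 0)
    (φ : ℕ → ℝ) (hφ : Function.Injective φ)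
    (hWγ : ∫⁻ x in Set.Ioi (0:ℝ),
        (‖(∑' k, c k * Complex.exp (-Complex.I * φ k * x)) * γ x‖₊ : ℝ≥0∞) ^ p < ⊤) :
    ∫⁻ x in Set.Ioi (0:ℝ), (‖γ x‖₊ : ℝ≥0∞) ^ p < ⊤ := by
  change ∫⁻ x in Ioi 0, ‖trigSeries c φ x * γ x‖ₑ ^ p < ∞ at hWγ
  change ∫⁻ x in Ioi 0, ‖γ x‖ₑ ^ p < ∞
  obtain ⟨m, T, ρ, hm, hT, hρ, hdense⟩ :=
    trigSeries.exists_volume_Ioc_inter_superlevel_ge hc hne hφ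
  set A := {x | m ≤ ‖trigSeries c φ x‖}
  have hA : MeasurableSet A :=
    (isClosed_le continuous_const (trigSeries.continuous hc).norm).measurableSet
  refine hγ.lintegral_rpow_lt_top_of_relDense hA hT hρ hdense hp ?_
  exact setLIntegral_rpow_enorm_lt_top_of_norm_ge hm (by linarith) (measurableSet_Ioi.inter hA)
    (fun x hx => hx.2) ((lintegral_mono_set inter_subset_left).trans_lt hWγ)
end

section
/- Let p ≥ 2 be an integer and β ∈ (0, 1/(p−1)). Let (a_n)_{n≥1} be real numbers such that a_n − 1 = Σ_{l=1}^∞ c_l e^{−inφ_l} γ^{(l)}_n for every n, where (c_l) are complex numbers, (φ_l) are real numbers, and (γ^{(l)}_n) are complex sequences satisfying: sup_l Σ_{n=1}^∞ |γ^{(l)}_{n+1} − γ^{(l)}_n| < ∞; Σ_{n=1}^∞ ( sup_l |γ^{(l)}_n| )^p < ∞; and Σ_{l=1}^∞ |c_l|^β < ∞. Then there exist complex numbers (c'_m)_{m≥1}, real numbers (φ'_m)_{m≥1} and complex sequences (γ'^{(m)}_n) such that a_n² − 1 = Σ_{m=1}^∞ c'_m e^{−inφ'_m} γ'^{(m)}_n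 for every n, and such that sup_m Σ_{n=1}^∞ |γ'^{(m)}_{n+1} − γ'^{(m)}_n| < ∞, Σ_{n=1}^∞ ( sup_m |γ'^{(m)}_n| )^p < ∞, and Σ_{m=1}^∞ |c'_m|^β < ∞. -/
open scoped BigOperators ENNReal
open MeasureTheory

/-!
Write `a² - 1 = 2 (a - 1) + (a - 1)²` and expand the square of the absolutely convergent series
for `a - 1` as a double series over pairs `(l, l')`, whose terms have coefficient `c_l c_l'`,
frequency `φ_l + φ_l'` and profile `γ_l γ_l'`. The three conditions survive:
`‖c_l c_l'‖^β` is a product of summable families; a sequence in `ℓ^p` is bounded, say by `M`,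
so `sup |γ_l γ_l'| ≤ M sup |γ_l|`; and the variation of `γ_l γ_l'` is at most `M` times the sum
of the variations of the factors (discrete Leibniz rule). Re-indexing `ℕ ⊕ ℕ × ℕ ≃ ℕ` finishes.
-/

lemma ENNReal.le_tsum_pow_rpow_inv {ι : Type*} (s : ι → ℝ≥0∞) {p : ℕ} (hp : p ≠ 0) (i : ι) :
    s i ≤ (∑' j, s j ^ p) ^ (p⁻¹ : ℝ) :=
  calc s i = (s i ^ p) ^ (p⁻¹ : ℝ) := (ENNReal.pow_rpow_inv_natCast hp _).symm
    _ ≤ _ := ENNReal.rpow_le_rpow (ENNReal.le_tsum i) (by positivity)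

section NormedRing

variable {ι R : Type*}

lemma nnnorm_mul_sub_mul_le [SeminormedRing R] (a a' b b' : R) :
    ‖a' * b' - a * b‖₊ ≤ ‖a'‖₊ * ‖b' - b‖₊ + ‖a' - a‖₊ * ‖b‖₊ :=
  calc ‖a' * b' - a * b‖₊ = ‖a' * (b' - b) + (a' - a) * b‖₊ := by noncomm_ring
    _ ≤ _ := (nnnorm_add_le _ _).trans (add_le_add (nnnorm_mul_le _ _) (nnnorm_mul_le _ _))

lemma tsum_nnnorm_mul_sub_le [SeminormedRing R] {f g : ℕ → R} {M : ℝ≥0∞}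
    (hf : ∀ n, (‖f n‖₊ : ℝ≥0∞) ≤ M) (hg : ∀ n, (‖g n‖₊ : ℝ≥0∞) ≤ M) :
    ∑' n, (‖f (n + 1) * g (n + 1) - f n * g n‖₊ : ℝ≥0∞) ≤
      M * ∑' n, (‖g (n + 1) - g n‖₊ : ℝ≥0∞) + M * ∑' n, (‖f (n + 1) - f n‖₊ : ℝ≥0∞) := by
  rw [← ENNReal.tsum_mul_left, ← ENNReal.tsum_mul_left, ← ENNReal.tsum_add]
  refine ENNReal.tsum_le_tsum fun n => ?_
  calc (‖f (n + 1) * g (n + 1) - f n * g n‖₊ : ℝ≥0∞)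
      ≤ ‖f (n + 1)‖₊ * ‖g (n + 1) - g n‖₊ + ‖f (n + 1) - f n‖₊ * ‖g n‖₊ := by
        exact_mod_cast nnnorm_mul_sub_mul_le _ _ _ _
    _ ≤ M * ‖g (n + 1) - g n‖₊ + M * ‖f (n + 1) - f n‖₊ := by
        rw [mul_comm _ (‖g n‖₊ : ℝ≥0∞)]
        gcongr
        exacts [hf _, hg _]

lemma summable_norm_sumElim_two_mul_mul [NormedRing R] {f : ι → R}
    (hf : Summable fun i => ‖f i‖) :
    Summable fun i => ‖Sum.elim (fun i => 2 * f i) (fun q : ι × ι => f q.1 * f q.2) i‖ :=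
  .sum _ ((hf.mul_left ‖(2 : R)‖).of_nonneg_of_le (fun _ => norm_nonneg _)
    fun _ => norm_mul_le _ _) (hf.mul_norm hf)

lemma hasSum_sumElim_two_mul_mul [NormedRing R] [CompleteSpace R] {f : ι → R}
    (hf : Summable fun i => ‖f i‖) :
    HasSum (Sum.elim (fun i => 2 * f i) fun q : ι × ι => f q.1 * f q.2)
      (2 * ∑' i, f i + (∑' i, f i) * ∑' i, f i) := by
  refine .sum (hf.of_norm.hasSum.mul_left 2) ?_
  rw [tsum_mul_tsum_of_summable_norm hf hf]
  exact (summable_mul_of_summable_norm hf hf).hasSum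

end NormedRing

namespace ModulatedExpansion

variable {ι κ : Type*}

noncomputable def waveTerm (c : ℂ) (θ : ℝ) (g : ℕ → ℂ) (n : ℕ) : ℂ :=
  c * Complex.exp (-Complex.I * (n : ℝ) * θ) * g n

lemma waveTerm_two_mul (c : ℂ) (θ : ℝ) (g : ℕ → ℂ) (n : ℕ) :
    waveTerm (2 * c) θ g n = 2 * waveTerm c θ g n := by
  simp only [waveTerm]; ring

lemma waveTerm_mul_waveTerm (c c' : ℂ) (θ θ' : ℝ) (g g' : ℕ → ℂ) (n : ℕ) :
    waveTerm c θ g n * waveTerm c' θ' g' n = waveTerm (c * c') (θ + θ') (g * g') n := by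
  simp only [waveTerm, Pi.mul_apply, Complex.ofReal_add, mul_add, Complex.exp_add]; ring

structure IsExpansion (x : ℕ → ℂ) (c : ι → ℂ) (φ : ι → ℝ) (γ : ι → ℕ → ℂ) : Prop where
  summable_norm : ∀ n, Summable fun i => ‖waveTerm (c i) (φ i) (γ i) n‖
  hasSum : ∀ n, HasSum (fun i => waveTerm (c i) (φ i) (γ i) n) (x n)

structure IsAdmissible (p : ℕ) (β : ℝ) (c : ι → ℂ) (γ : ι → ℕ → ℂ) : Prop where
  iSup_variation_lt_top : ⨆ i, ∑' n, (‖γ i (n + 1) - γ i n‖₊ : ℝ≥0∞) < ⊤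
  tsum_iSup_pow_lt_top : ∑' n, (⨆ i, (‖γ i n‖₊ : ℝ≥0∞)) ^ p < ⊤
  summable_rpow : Summable fun i => ‖c i‖ ^ β

def sqCoeff (c : ι → ℂ) : ι ⊕ ι × ι → ℂ := Sum.elim (fun i => 2 * c i) fun q => c q.1 * c q.2

def sqPhase (φ : ι → ℝ) : ι ⊕ ι × ι → ℝ := Sum.elim φ fun q => φ q.1 + φ q.2

def sqProfile (γ : ι → ℕ → ℂ) : ι ⊕ ι × ι → ℕ → ℂ := Sum.elim γ fun q => γ q.1 * γ q.2

lemma waveTerm_sq (c : ι → ℂ) (φ : ι → ℝ) (γ : ι → ℕ → ℂ) (n : ℕ) (i : ι ⊕ ι × ι) :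
    waveTerm (sqCoeff c i) (sqPhase φ i) (sqProfile γ i) n =
      Sum.elim (fun i => 2 * waveTerm (c i) (φ i) (γ i) n)
        (fun q => waveTerm (c q.1) (φ q.1) (γ q.1) n * waveTerm (c q.2) (φ q.2) (γ q.2) n) i := by
  rcases i with i | q
  · exact waveTerm_two_mul _ _ _ _
  · exact (waveTerm_mul_waveTerm _ _ _ _ _ _ _).symm

namespace IsExpansion

variable {x : ℕ → ℂ} {c : ι → ℂ} {φ : ι → ℝ} {γ : ι → ℕ → ℂ}

lemma sq (h : IsExpansion x c φ γ) :
    IsExpansion (fun n => 2 * x n + x n * x n) (sqCoeff c) (sqPhase φ) (sqProfile γ) where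
  summable_norm n := by
    simp only [waveTerm_sq]; exact summable_norm_sumElim_two_mul_mul (h.summable_norm n)
  hasSum n := by
    simp only [waveTerm_sq, ← (h.hasSum n).tsum_eq]
    exact hasSum_sumElim_two_mul_mul (h.summable_norm n)

lemma comp_equiv (h : IsExpansion x c φ γ) (e : κ ≃ ι) :
    IsExpansion x (c ∘ e) (φ ∘ e) (γ ∘ e) where
  summable_norm n := (e.summable_iff (f := fun i => ‖waveTerm (c i) (φ i) (γ i) n‖)).2
    (h.summable_norm n)
  hasSum n := (e.hasSum_iff (f := fun i => waveTerm (c i) (φ i) (γ i) n)).2 (h.hasSum n)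

end IsExpansion

lemma summable_rpow_sqCoeff {β : ℝ} {c : ι → ℂ} (h : Summable fun i => ‖c i‖ ^ β) :
    Summable fun i => ‖sqCoeff c i‖ ^ β := by
  refine .sum _ ((h.mul_left (2 ^ β)).congr fun i => ?_) ?_
  · simp [sqCoeff, Real.mul_rpow]
  · refine (h.mul_of_nonneg h (fun _ => by positivity) fun _ => by positivity).congr fun q => ?_
    simp [sqCoeff, Real.mul_rpow]

section Profile

variable {γ : ι → ℕ → ℂ} {M : ℝ≥0∞}

lemma iSup_nnnorm_sqProfile_le (hγM : ∀ i n, (‖γ i n‖₊ : ℝ≥0∞) ≤ M) (n : ℕ) :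
    ⨆ i, (‖sqProfile γ i n‖₊ : ℝ≥0∞) ≤ (1 + M) * ⨆ i, (‖γ i n‖₊ : ℝ≥0∞) := by
  refine iSup_le ?_
  rintro (i | ⟨i, j⟩)
  · exact (le_iSup (fun i => (‖γ i n‖₊ : ℝ≥0∞)) i).trans (le_mul_of_one_le_left' le_self_add)
  · calc (‖γ i n * γ j n‖₊ : ℝ≥0∞) ≤ ‖γ i n‖₊ * ‖γ j n‖₊ := by
          exact_mod_cast nnnorm_mul_le _ _
      _ ≤ M * ⨆ i, (‖γ i n‖₊ : ℝ≥0∞) :=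
          mul_le_mul' (hγM i n) (le_iSup (fun i => (‖γ i n‖₊ : ℝ≥0∞)) j)
      _ ≤ _ := by gcongr; exact le_add_self

lemma iSup_variation_sqProfile_le (hγM : ∀ i n, (‖γ i n‖₊ : ℝ≥0∞) ≤ M) :
    ⨆ i, ∑' n, (‖sqProfile γ i (n + 1) - sqProfile γ i n‖₊ : ℝ≥0∞) ≤
      (1 + 2 * M) * ⨆ i, ∑' n, (‖γ i (n + 1) - γ i n‖₊ : ℝ≥0∞) := by
  set V := ⨆ i, ∑' n, (‖γ i (n + 1) - γ i n‖₊ : ℝ≥0∞)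
  have hγV (i : ι) : ∑' n, (‖γ i (n + 1) - γ i n‖₊ : ℝ≥0∞) ≤ V :=
    le_iSup (fun i => ∑' n, (‖γ i (n + 1) - γ i n‖₊ : ℝ≥0∞)) i
  rw [add_mul, one_mul, two_mul, add_mul]
  refine iSup_le ?_
  rintro (i | ⟨i, j⟩)
  · exact (hγV i).trans le_self_add
  · exact (tsum_nnnorm_mul_sub_le (hγM i) (hγM j)).trans
      ((add_le_add (by gcongr; exact hγV j) (by gcongr; exact hγV i)).trans le_add_self)

end Profile

namespace IsAdmissible

variable {p : ℕ} {β : ℝ} {c : ι → ℂ} {γ : ι → ℕ → ℂ}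

lemma sq (h : IsAdmissible p β c γ) (hp : p ≠ 0) : IsAdmissible p β (sqCoeff c) (sqProfile γ) := by
  set s : ℕ → ℝ≥0∞ := fun n => ⨆ i, (‖γ i n‖₊ : ℝ≥0∞)
  set M : ℝ≥0∞ := (∑' n, s n ^ p) ^ (p⁻¹ : ℝ)
  have hM : M < ⊤ := ENNReal.rpow_lt_top_of_nonneg (by positivity) h.tsum_iSup_pow_lt_top.ne
  have hγM (i : ι) (n : ℕ) : (‖γ i n‖₊ : ℝ≥0∞) ≤ M :=
    (le_iSup (fun i => (‖γ i n‖₊ : ℝ≥0∞)) i).trans (ENNReal.le_tsum_pow_rpow_inv s hp n)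
  refine ⟨?_, ?_, summable_rpow_sqCoeff h.summable_rpow⟩
  · refine (iSup_variation_sqProfile_le hγM).trans_lt ?_
    have := h.iSup_variation_lt_top
    finiteness
  · calc ∑' n, (⨆ i, (‖sqProfile γ i n‖₊ : ℝ≥0∞)) ^ p ≤ ∑' n, ((1 + M) * s n) ^ p :=
          ENNReal.tsum_le_tsum fun n => pow_le_pow_left' (iSup_nnnorm_sqProfile_le hγM n) p
      _ = (1 + M) ^ p * ∑' n, s n ^ p := by simp_rw [mul_pow]; exact ENNReal.tsum_mul_left
      _ < ⊤ := by have := h.tsum_iSup_pow_lt_top; finiteness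

lemma comp_equiv (h : IsAdmissible p β c γ) (e : κ ≃ ι) : IsAdmissible p β (c ∘ e) (γ ∘ e) where
  iSup_variation_lt_top := by
    simpa only [Function.comp_apply, e.iSup_comp
      (g := fun i => ∑' n, (‖γ i (n + 1) - γ i n‖₊ : ℝ≥0∞))] using h.iSup_variation_lt_top
  tsum_iSup_pow_lt_top := by
    have (n : ℕ) := e.iSup_comp (g := fun i => (‖γ i n‖₊ : ℝ≥0∞))
    simpa only [Function.comp_apply, this] using h.tsum_iSup_pow_lt_top
  summable_rpow := (e.summable_iff (f := fun i => ‖c i‖ ^ β)).2 h.summable_rpow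

end IsAdmissible

end ModulatedExpansion

open ModulatedExpansion

theorem stmt18_general (p : ℕ) (hp : 2 ≤ p) (β : ℝ)
    (a : ℕ → ℝ) (c : ℕ → ℂ) (φ : ℕ → ℝ) (γ : ℕ → ℕ → ℂ)
    (habs : ∀ n : ℕ, Summable fun l =>
      ‖c l * Complex.exp (-Complex.I * (n : ℝ) * φ l) * γ l n‖)
    (hrep : ∀ n : ℕ, ((a n - 1 : ℝ) : ℂ) =
      ∑' l, c l * Complex.exp (-Complex.I * (n : ℝ) * φ l) * γ l n)
    (hBV : ⨆ l, ∑' n : ℕ, (‖γ l (n + 1) - γ l n‖₊ : ℝ≥0∞) < ⊤)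
    (hlp : ∑' n : ℕ, (⨆ l, (‖γ l n‖₊ : ℝ≥0∞)) ^ p < ⊤)
    (hcβ : Summable fun l => ‖c l‖ ^ β) :
    ∃ (c' : ℕ → ℂ) (φ' : ℕ → ℝ) (γ' : ℕ → ℕ → ℂ),
      (∀ n : ℕ, Summable fun m =>
        ‖c' m * Complex.exp (-Complex.I * (n : ℝ) * φ' m) * γ' m n‖) ∧
      (∀ n : ℕ, ((a n ^ 2 - 1 : ℝ) : ℂ) =
        ∑' m, c' m * Complex.exp (-Complex.I * (n : ℝ) * φ' m) * γ' m n) ∧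
      (⨆ m, ∑' n : ℕ, (‖γ' m (n + 1) - γ' m n‖₊ : ℝ≥0∞) < ⊤) ∧
      (∑' n : ℕ, (⨆ m, (‖γ' m n‖₊ : ℝ≥0∞)) ^ p < ⊤) ∧
      Summable fun m => ‖c' m‖ ^ β := by
  have hexp : IsExpansion (fun n => ((a n - 1 : ℝ) : ℂ)) c φ γ :=
    ⟨habs, fun n => hrep n ▸ (habs n).of_norm.hasSum⟩
  have hadm : IsAdmissible p β c γ := ⟨hBV, hlp, hcβ⟩
  let e : ℕ ≃ ℕ ⊕ ℕ × ℕ := (Denumerable.eqv _).symm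
  have hexp' := hexp.sq.comp_equiv e
  have hadm' := (hadm.sq (by omega)).comp_equiv e
  exact ⟨sqCoeff c ∘ e, sqPhase φ ∘ e, sqProfile γ ∘ e, hexp'.summable_norm,
    fun n => .trans (by push_cast; ring) (hexp'.hasSum n).tsum_eq.symm,
    hadm'.iSup_variation_lt_top, hadm'.tsum_iSup_pow_lt_top, hadm'.summable_rpow⟩

theorem stmt18 (p : ℕ) (hp : 2 ≤ p) (β : ℝ) (hβ0 : 0 < β) (hβ1 : β < 1 / ((p : ℝ) - 1))
    (a : ℕ → ℝ) (c : ℕ → ℂ) (φ : ℕ → ℝ) (γ : ℕ → ℕ → ℂ)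
    (habs : ∀ n : ℕ, Summable fun l =>
      ‖c l * Complex.exp (-Complex.I * (n : ℝ) * φ l) * γ l n‖)
    (hrep : ∀ n : ℕ, ((a n - 1 : ℝ) : ℂ) =
      ∑' l, c l * Complex.exp (-Complex.I * (n : ℝ) * φ l) * γ l n)
    (hBV : ⨆ l, ∑' n : ℕ, (‖γ l (n + 1) - γ l n‖₊ : ℝ≥0∞) < ⊤)
    (hlp : ∑' n : ℕ, (⨆ l, (‖γ l n‖₊ : ℝ≥0∞)) ^ p < ⊤)
    (hcβ : Summable fun l => ‖c l‖ ^ β) :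
    ∃ (c' : ℕ → ℂ) (φ' : ℕ → ℝ) (γ' : ℕ → ℕ → ℂ),
      (∀ n : ℕ, Summable fun m =>
        ‖c' m * Complex.exp (-Complex.I * (n : ℝ) * φ' m) * γ' m n‖) ∧
      (∀ n : ℕ, ((a n ^ 2 - 1 : ℝ) : ℂ) =
        ∑' m, c' m * Complex.exp (-Complex.I * (n : ℝ) * φ' m) * γ' m n) ∧
      (⨆ m, ∑' n : ℕ, (‖γ' m (n + 1) - γ' m n‖₊ : ℝ≥0∞) < ⊤) ∧
      (∑' n : ℕ, (⨆ m, (‖γ' m n‖₊ : ℝ≥0∞)) ^ p < ⊤) ∧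
      Summable fun m => ‖c' m‖ ^ β :=
  stmt18_general p hp β a c φ γ habs hrep hBV hlp hcβ
end

section
/- Let s, t ≥ 0 be integers, let (γ^{(l)}_n)_{n≥M} (for l ranging over some index set) be complex sequences with lim_{n→∞} γ^{(l)}_n = 0 for each l, and let τ ≥ 0 satisfy Σ_{n=M}^∞ |γ^{(l)}_{n+1} − γ^{(l)}_n| ≤ τ for every l. Let (φ_l) be real numbers indexed by the same set, let k be an integer, η ∈ ℝ, let (θ_n)_{n≥M} be real numbers, let k_1,…,k_s and l_1,…,l_t be indices, and set Γ_n = γ^{(k_1)}_n ⋯ γ^{(k_s)}_n · conj(γ^{(l_1)}_n) ⋯ conj(γ^{(l_t)}_n) and φ = φ_{k_1} + ⋯ + φ_{k_s} − φ_{l_1} − ⋯ − φ_{l_t}. Then for all integers N ≥ M, | Σ_{n=M}^{N} ( (e^{−i(kη−φ)} − 1) · e^{−inφ} Γ_n e^{ik((n+1)η + 2θ_n)} − e^{−inφ} Γ_n e^{ik((n+1)η + 2θ_n)} · ( e^{2ik(θ_{n+1} − θ_n)} − 1 ) ) | ≤ 2 τ^{s+t}. -/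
/-!
With `E_n = exp(i((1 - n)φ + k(nη + 2θ_n)))`, the `n`-th summand is exactly `Γ_n (E_n - E_{n+1})`,
and `‖E_n‖ = 1`. Summation by parts bounds the sum by `‖Γ_M‖ + ‖Γ_N‖ + ∑_{M ≤ n < N} ‖Γ_{n+1} - Γ_n‖`,
so it suffices that `‖Γ_N‖ + ∑_{M ≤ n < N} ‖Γ_{n+1} - Γ_n‖ ≤ τ^(s+t)` for all `N ≥ M`. Bounds of this
form are multiplicative (a telescoping argument), and for each factor `γ^(l) → 0` the bound `τ`
follows from `‖γ^(l)_N‖ ≤ ∑_{n ≥ N} ‖γ^(l)_{n+1} - γ^(l)_n‖`.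
-/

open scoped ENNReal
open Finset Filter Topology

section VariationMajorant

variable {E R : Type*} [SeminormedAddCommGroup E] [NormedCommRing R]

/-- For `g → 0` this says that the total variation of `g` on `[M, ∞)` is at most `C`; unlike the
total variation, it is multiplicative in `g` and holds for `g = 1`, `C = 1`. -/
def VariationMajorant (M : ℕ) (g : ℕ → E) (C : ℝ) : Prop :=
  ∀ N, M ≤ N → ‖g N‖ + ∑ n ∈ Ico M N, ‖g (n + 1) - g n‖ ≤ C

theorem VariationMajorant.of_tendsto_zero {M : ℕ} {g : ℕ → E} {C : ℝ} (hC : 0 ≤ C)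
    (hg : Tendsto g atTop (𝓝 0))
    (hvar : ∑' n, ‖g (M + n + 1) - g (M + n)‖ₑ ≤ ENNReal.ofReal C) :
    VariationMajorant M g C := by
  intro N hN
  obtain ⟨K, rfl⟩ := Nat.exists_eq_add_of_le hN
  set d : ℕ → ℝ≥0∞ := fun n => ‖g (M + n + 1) - g (M + n)‖ₑ
  have hpartial : ∀ L, ‖g (M + K) - g (M + (K + L))‖ₑ + ∑ n ∈ range K, d n ≤ ∑' n, d n := by
    intro L
    have hdist := edist_le_Ico_sum_edist (fun n => g (M + n)) (Nat.le_add_right K L)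
    simp only [edist_eq_enorm_sub] at hdist
    calc ‖g (M + K) - g (M + (K + L))‖ₑ + ∑ n ∈ range K, d n
        ≤ ∑ n ∈ Ico K (K + L), d n + ∑ n ∈ range K, d n := by
          gcongr
          refine hdist.trans_eq (sum_congr rfl fun n _ => ?_)
          rw [← enorm_neg, neg_sub]
          rfl
      _ = ∑ n ∈ range (K + L), d n := by
          rw [add_comm, sum_range_add_sum_Ico _ (Nat.le_add_right K L)]
      _ ≤ ∑' n, d n := ENNReal.sum_le_tsum _
  have hlim : Tendsto (fun L => ‖g (M + K) - g (M + (K + L))‖ₑ + ∑ n ∈ range K, d n) atTop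
      (𝓝 (‖g (M + K) - 0‖ₑ + ∑ n ∈ range K, d n)) := by
    have hshift : Tendsto (fun L => g (M + (K + L))) atTop (𝓝 0) :=
      hg.comp (tendsto_add_atTop_nat (M + K)) |>.congr fun L => by
        rw [Function.comp_apply, Nat.add_comm L, Nat.add_assoc]
    exact ((tendsto_const_nhds.sub hshift).enorm).add tendsto_const_nhds
  have hbound := (le_of_tendsto' hlim hpartial).trans hvar
  rw [sub_zero] at hbound
  rw [← ENNReal.ofReal_le_ofReal_iff hC, ENNReal.ofReal_add (norm_nonneg _)
    (sum_nonneg fun _ _ => norm_nonneg _), ENNReal.ofReal_sum_of_nonneg fun _ _ => norm_nonneg _,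
    sum_Ico_eq_sum_range, Nat.add_sub_cancel_left]
  simpa only [ofReal_norm] using hbound

theorem VariationMajorant.star [StarAddMonoid E] [NormedStarGroup E] {M : ℕ} {g : ℕ → E}
    {C : ℝ} (h : VariationMajorant M g C) : VariationMajorant M (fun n => star (g n)) C := by
  intro N hN
  simpa only [← star_sub, norm_star] using h N hN

theorem VariationMajorant.mul {M : ℕ} {f g : ℕ → R} {A B : ℝ}
    (hf : VariationMajorant M f A) (hg : VariationMajorant M g B) :
    VariationMajorant M (fun n => f n * g n) (A * B) := by
  -- The increment of `f * g` at `N` is paid for by the decrease of `a N * b N`.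
  set a : ℕ → ℝ := fun N => A - ∑ n ∈ Ico M N, ‖f (n + 1) - f n‖
  set b : ℕ → ℝ := fun N => B - ∑ n ∈ Ico M N, ‖g (n + 1) - g n‖
  have ha : ∀ N, M ≤ N → ‖f N‖ ≤ a N := fun N hN => by linarith [hf N hN]
  have hb : ∀ N, M ≤ N → ‖g N‖ ≤ b N := fun N hN => by linarith [hg N hN]
  suffices htel : ∀ N, M ≤ N →
      ∑ n ∈ Ico M N, ‖f (n + 1) * g (n + 1) - f n * g n‖ + a N * b N ≤ A * B by
    intro N hN
    have hfg : ‖f N * g N‖ ≤ a N * b N := (norm_mul_le _ _).trans <|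
      mul_le_mul (ha N hN) (hb N hN) (norm_nonneg _) ((norm_nonneg _).trans (ha N hN))
    linarith [htel N hN]
  have ha_succ : ∀ N, M ≤ N → a N = ‖f (N + 1) - f N‖ + a (N + 1) := fun N hN => by
    simp only [a, sum_Ico_succ_top hN]; ring
  have hb_succ : ∀ N, M ≤ N → b N = ‖g (N + 1) - g N‖ + b (N + 1) := fun N hN => by
    simp only [b, sum_Ico_succ_top hN]; ring
  have ha_base : a M = A := by simp [a]
  have hb_base : b M = B := by simp [b]
  clear_value a b
  intro N hN
  induction N, hN using Nat.le_induction with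
  | base => simp [ha_base, hb_base]
  | succ N hMN ih =>
    have hstep : ‖f (N + 1) * g (N + 1) - f N * g N‖
        ≤ a (N + 1) * ‖g (N + 1) - g N‖ + ‖f (N + 1) - f N‖ * b N := by
      rw [show f (N + 1) * g (N + 1) - f N * g N
          = f (N + 1) * (g (N + 1) - g N) + (f (N + 1) - f N) * g N by ring]
      refine (norm_add_le _ _).trans (add_le_add ?_ ?_)
      · exact (norm_mul_le _ _).trans
          (mul_le_mul_of_nonneg_right (ha _ (by omega)) (norm_nonneg _))
      · exact (norm_mul_le _ _).trans
          (mul_le_mul_of_nonneg_left (hb _ hMN) (norm_nonneg _))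
    rw [sum_Ico_succ_top hMN]
    linear_combination ih + hstep - b N * ha_succ N hMN - a (N + 1) * hb_succ N hMN

variable [NormOneClass R]

theorem VariationMajorant.one (M : ℕ) : VariationMajorant M (fun _ => (1 : R)) 1 := by
  intro N _
  simp

theorem VariationMajorant.prod {ι : Type*} {M : ℕ} (S : Finset ι) {f : ι → ℕ → R} {C : ι → ℝ}
    (h : ∀ i ∈ S, VariationMajorant M (f i) (C i)) :
    VariationMajorant M (fun n => ∏ i ∈ S, f i n) (∏ i ∈ S, C i) := by
  classical
  induction S using Finset.induction_on with
  | empty => simpa using VariationMajorant.one M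
  | insert i S hi ih =>
    simp only [prod_insert hi]
    exact (h i (mem_insert_self i S)).mul (ih fun j hj => h j (mem_insert_of_mem hj))

end VariationMajorant

theorem sum_Icc_mul_sub_succ_eq {R : Type*} [Ring R] (G E : ℕ → R) {M N : ℕ} (hMN : M ≤ N) :
    ∑ n ∈ Icc M N, G n * (E n - E (n + 1))
      = G M * E M - G N * E (N + 1) + ∑ n ∈ Ico M N, (G (n + 1) - G n) * E (n + 1) := by
  induction N, hMN using Nat.le_induction with
  | base => simp [mul_sub]
  | succ N hMN ih =>
    rw [sum_Icc_succ_top (by omega), ih, sum_Ico_succ_top hMN]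
    noncomm_ring

theorem VariationMajorant.norm_sum_mul_sub_le {R : Type*} [NormedRing R] {M N : ℕ}
    {G E : ℕ → R} {C : ℝ} (hG : VariationMajorant M G C) (hE : ∀ n, ‖E n‖ ≤ 1) (hMN : M ≤ N) :
    ‖∑ n ∈ Icc M N, G n * (E n - E (n + 1))‖ ≤ 2 * C := by
  have hmul : ∀ a n, ‖a * E n‖ ≤ ‖a‖ := fun a n =>
    (norm_mul_le _ _).trans (mul_le_of_le_one_right (norm_nonneg _) (hE n))
  have hM : ‖G M‖ ≤ C := by simpa using hG M le_rfl
  rw [sum_Icc_mul_sub_succ_eq G E hMN]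
  calc _ ≤ ‖G M * E M‖ + ‖G N * E (N + 1)‖
        + ∑ n ∈ Ico M N, ‖(G (n + 1) - G n) * E (n + 1)‖ :=
        (norm_add_le _ _).trans (add_le_add (norm_sub_le _ _) (norm_sum_le _ _))
    _ ≤ ‖G M‖ + (‖G N‖ + ∑ n ∈ Ico M N, ‖G (n + 1) - G n‖) := by
        rw [← add_assoc]
        gcongr with n <;> apply hmul
    _ ≤ 2 * C := by linarith [hG N hMN]

open Complex

noncomputable def phase (φ k η : ℝ) (θ : ℕ → ℝ) (n : ℕ) : ℂ :=
  exp (((1 - n) * φ + k * (n * η + 2 * θ n) : ℝ) * I)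

theorem norm_phase (φ k η : ℝ) (θ : ℕ → ℝ) (n : ℕ) : ‖phase φ k η θ n‖ = 1 :=
  norm_exp_ofReal_mul_I _

theorem summand_eq_mul_sub_phase (φ k η : ℝ) (θ : ℕ → ℝ) (z : ℂ) (n : ℕ) :
    (exp (-I * (k * η - φ : ℝ)) - 1) * exp (-I * (n : ℝ) * (φ : ℝ)) * z *
          exp (I * k * (((n : ℝ) + 1) * η + 2 * θ n))
        - exp (-I * (n : ℝ) * (φ : ℝ)) * z * exp (I * k * (((n : ℝ) + 1) * η + 2 * θ n)) *
          (exp (2 * I * k * (θ (n + 1) - θ n)) - 1)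
      = z * (phase φ k η θ n - phase φ k η θ (n + 1)) := by
  have hn : phase φ k η θ n = exp (-I * (k * η - φ : ℝ)) * exp (-I * (n : ℝ) * (φ : ℝ)) *
      exp (I * k * (((n : ℝ) + 1) * η + 2 * θ n)) := by
    rw [phase, ← exp_add, ← exp_add]; congr 1; push_cast; ring
  have hn1 : phase φ k η θ (n + 1) = exp (-I * (n : ℝ) * (φ : ℝ)) *
      exp (I * k * (((n : ℝ) + 1) * η + 2 * θ n)) * exp (2 * I * k * (θ (n + 1) - θ n)) := by
    rw [phase, ← exp_add, ← exp_add]; congr 1; push_cast; ring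
  rw [hn, hn1]
  ring

theorem stmt19 {ι : Type*} (s t M : ℕ)
    (γ : ι → ℕ → ℂ)
    (hlim : ∀ l, Filter.Tendsto (γ l) Filter.atTop (nhds 0))
    (τ : ℝ) (hτ : 0 ≤ τ)
    (hvar : ∀ l, ∑' n : ℕ, (‖γ l (M + n + 1) - γ l (M + n)‖₊ : ℝ≥0∞) ≤ ENNReal.ofReal τ)
    (φ : ι → ℝ) (k : ℤ) (η : ℝ) (θ : ℕ → ℝ)
    (ks : Fin s → ι) (ls : Fin t → ι) :
    ∀ N : ℕ, M ≤ N →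
      ‖∑ n ∈ Finset.Icc M N,
          ((Complex.exp (-Complex.I *
                ((k : ℝ) * η - ((∑ i, φ (ks i)) - ∑ i, φ (ls i)) : ℝ)) - 1) *
              Complex.exp (-Complex.I * (n : ℝ) * ((∑ i, φ (ks i)) - ∑ i, φ (ls i) : ℝ)) *
              ((∏ i, γ (ks i) n) * ∏ i, starRingEnd ℂ (γ (ls i) n)) *
              Complex.exp (Complex.I * (k : ℝ) * (((n : ℝ) + 1) * η + 2 * θ n))
            - Complex.exp (-Complex.I * (n : ℝ) * ((∑ i, φ (ks i)) - ∑ i, φ (ls i) : ℝ)) *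
              ((∏ i, γ (ks i) n) * ∏ i, starRingEnd ℂ (γ (ls i) n)) *
              Complex.exp (Complex.I * (k : ℝ) * (((n : ℝ) + 1) * η + 2 * θ n)) *
              (Complex.exp (2 * Complex.I * (k : ℝ) * (θ (n + 1) - θ n)) - 1))‖
        ≤ 2 * τ ^ (s + t) := by
  intro N hMN
  have hγ : ∀ l, VariationMajorant M (γ l) τ := fun l =>
    .of_tendsto_zero hτ (hlim l) (hvar l)
  have hΓ : VariationMajorant M
      (fun n => (∏ i, γ (ks i) n) * ∏ i, starRingEnd ℂ (γ (ls i) n)) (τ ^ (s + t)) := by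
    have hks := VariationMajorant.prod univ fun i _ => hγ (ks i)
    have hls := VariationMajorant.prod univ fun i _ => (hγ (ls i)).star
    have := hks.mul hls
    simp only [prod_const, card_univ, Fintype.card_fin, ← pow_add] at this
    simpa only [starRingEnd_apply] using this
  simp only [summand_eq_mul_sub_phase]
  exact hΓ.norm_sum_mul_sub_le (fun n => (norm_phase _ _ _ _ n).le) hMN
end
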